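/- arXiv:math/0608536 — 2 statements merged into one kernel-verified Lean document; each statement's English description precedes it below -/
import Mathlib

section
/- Assume Axioms A3 and A4 hold with uniform convergence on compact sets, that d^x is nondegenerate for every x, and let Σ^x(u, v) = lim_{ε→0+} Σ_ε^x(u, v) and inv^x(u) = lim_{ε→0+} inv_ε^x(u) = Δ^x(u, x) (these limits being uniform on compact sets). Then (X, Σ^x) is a group with neutral element x: for all u, v, w ∈ X, Σ^x(u, Σ^x(v, w)) = Σ^x(Σ^x(u, v), w); Σ^x(x, u) = Σ^x(u, x) = u; Σ^x(u, inv^x(u)) = Σ^x(inv^x(u), u) = x; and inv^x(inv^x(u)) = u. -/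
open Filter Topology

/-!
Write `Σ_ε` and `Δ_ε` for the approximate sum and difference at a base point `x`. For every
`ε > 0` they satisfy exact identities inherited from `δ_ε ∘ δ_μ = δ_{εμ}`:
`Σ_ε(u, Δ_ε(u, v)) = v`, `Δ_ε(u, u) = δ_ε^x u`, and associativity of `Σ_ε` up to moving the base
point of the inner sum from `x` to `δ_ε^x u`. Since `δ_ε^x u → x` and the convergence
`Σ_ε → Σ` is locally uniform, these identities pass to the limit, giving an associative `Σ^x`
with a left division `Δ^x` satisfying `Δ^x(u, u) = x`. Such an operation is a group with
neutral element `x` and inverse `u ↦ Δ^x(u, x)`.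
-/

abbrev Group.ofLeftDiv {G : Type*} [Mul G] [One G] (div : G → G → G)
    (assoc : ∀ a b c : G, a * b * c = a * (b * c))
    (mul_div : ∀ a b : G, a * div a b = b) (div_self : ∀ a : G, div a a = 1) : Group G :=
  let _ : Inv G := ⟨fun a => div a 1⟩
  Group.ofRightAxioms assoc (fun a => div_self a ▸ mul_div a a) (fun a => mul_div a 1)

structure IsDilationFamily {X : Type*} [TopologicalSpace X] (δ : ℝ → X → X → X) : Prop where
  apply_apply : ∀ ε μ : ℝ, 0 < ε → 0 < μ → ∀ x y : X, δ ε x (δ μ x y) = δ (ε * μ) x y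
  one_apply : ∀ x y : X, δ 1 x y = y
  apply_self : ∀ ε : ℝ, 0 < ε → ∀ x : X, δ ε x x = x
  continuousOn : ContinuousOn (fun p : ℝ × X × X => δ p.1 p.2.1 p.2.2) {p | 0 < p.1}
  tendsto_zero : ∀ x y : X, Tendsto (fun ε : ℝ => δ ε x y) (𝓝[>] 0) (𝓝 x)

namespace IsDilationFamily

variable {X : Type*} [TopologicalSpace X] {δ : ℝ → X → X → X} {ε : ℝ}

theorem inv_apply_apply (hδ : IsDilationFamily δ) (hε : 0 < ε) (x y : X) :
    δ ε⁻¹ x (δ ε x y) = y := by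
  rw [hδ.apply_apply _ _ (inv_pos.2 hε) hε, inv_mul_cancel₀ hε.ne', hδ.one_apply]

theorem apply_inv_apply (hδ : IsDilationFamily δ) (hε : 0 < ε) (x y : X) :
    δ ε x (δ ε⁻¹ x y) = y := by
  rw [hδ.apply_apply _ _ hε (inv_pos.2 hε), mul_inv_cancel₀ hε.ne', hδ.one_apply]

theorem continuous_apply (hδ : IsDilationFamily δ) (hε : 0 < ε) {Y : Type*} [TopologicalSpace Y]
    {f g : Y → X} (hf : Continuous f) (hg : Continuous g) :
    Continuous fun y => δ ε (f y) (g y) := by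
  refine continuous_iff_continuousAt.2 fun y => ?_
  have hδε : ContinuousAt (fun p : ℝ × X × X => δ p.1 p.2.1 p.2.2) (ε, f y, g y) :=
    hδ.continuousOn.continuousAt ((isOpen_lt continuous_const continuous_fst).mem_nhds hε)
  exact hδε.comp (f := fun y => (ε, f y, g y)) (by fun_prop)

end IsDilationFamily

section Approx

variable {X : Type*} (δ : ℝ → X → X → X)

noncomputable def approxSum (ε : ℝ) (x u v : X) : X := δ ε⁻¹ x (δ ε (δ ε x u) v)

noncomputable def approxDiff (ε : ℝ) (x u v : X) : X := δ ε⁻¹ (δ ε x u) (δ ε x v)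

variable {δ} [TopologicalSpace X] {ε : ℝ}

theorem approxSum_approxDiff (hδ : IsDilationFamily δ) (hε : 0 < ε) (x u v : X) :
    approxSum δ ε x u (approxDiff δ ε x u v) = v := by
  rw [approxSum, approxDiff, hδ.apply_inv_apply hε, hδ.inv_apply_apply hε]

theorem approxDiff_self (hδ : IsDilationFamily δ) (hε : 0 < ε) (x u : X) :
    approxDiff δ ε x u u = δ ε x u :=
  hδ.apply_self _ (inv_pos.2 hε) _

theorem approxSum_approxSum (hδ : IsDilationFamily δ) (hε : 0 < ε) (x u v w : X) :
    approxSum δ ε x u (approxSum δ ε (δ ε x u) v w) =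
      approxSum δ ε x (approxSum δ ε x u v) w := by
  simp only [approxSum, hδ.apply_inv_apply hε]

theorem continuous_approxSum (hδ : IsDilationFamily δ) (hε : 0 < ε) :
    Continuous fun p : X × X × X => approxSum δ ε p.1 p.2.1 p.2.2 :=
  hδ.continuous_apply (inv_pos.2 hε) continuous_fst <|
    hδ.continuous_apply hε (hδ.continuous_apply hε continuous_fst (by fun_prop)) (by fun_prop)

theorem limit_approxDiff_self [T2Space X] {D : X → X → X → X} (hδ : IsDilationFamily δ)
    (hD : ∀ x u v : X, Tendsto (fun ε => approxDiff δ ε x u v) (𝓝[>] 0) (𝓝 (D x u v)))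
    (x u : X) : D x u u = x := by
  refine tendsto_nhds_unique_of_eventuallyEq (hD x u u) (hδ.tendsto_zero x u) ?_
  filter_upwards [self_mem_nhdsWithin] with ε hε
  exact approxDiff_self hδ hε x u

end Approx

section Limits

variable {X : Type*} [UniformSpace X] {δ : ℝ → X → X → X} {S D : X → X → X → X}

theorem tendsto_approxSum (hδ : IsDilationFamily δ)
    (hS : TendstoLocallyUniformly (fun ε (p : X × X × X) => approxSum δ ε p.1 p.2.1 p.2.2)
      (fun p => S p.1 p.2.1 p.2.2) (𝓝[>] 0))
    {x u v : ℝ → X} {x₀ u₀ v₀ : X} (hx : Tendsto x (𝓝[>] 0) (𝓝 x₀))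
    (hu : Tendsto u (𝓝[>] 0) (𝓝 u₀)) (hv : Tendsto v (𝓝[>] 0) (𝓝 v₀)) :
    Tendsto (fun ε => approxSum δ ε (x ε) (u ε) (v ε)) (𝓝[>] 0) (𝓝 (S x₀ u₀ v₀)) := by
  have hcont : ∀ᶠ ε in 𝓝[>] (0 : ℝ),
      Continuous fun p : X × X × X => approxSum δ ε p.1 p.2.1 p.2.2 :=
    eventually_nhdsWithin_of_forall fun _ hε => continuous_approxSum hδ hε
  exact hS.tendsto_comp (hS.continuous hcont.frequently).continuousAt
    (hx.prodMk_nhds (hu.prodMk_nhds hv))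

variable [T2Space X]

theorem limit_approxSum_assoc (hδ : IsDilationFamily δ)
    (hS : TendstoLocallyUniformly (fun ε (p : X × X × X) => approxSum δ ε p.1 p.2.1 p.2.2)
      (fun p => S p.1 p.2.1 p.2.2) (𝓝[>] 0)) (x u v w : X) :
    S x (S x u v) w = S x u (S x v w) := by
  have hsum : ∀ x u v : X, Tendsto (fun ε => approxSum δ ε x u v) (𝓝[>] 0) (𝓝 (S x u v)) :=
    fun x u v => tendsto_approxSum hδ hS tendsto_const_nhds tendsto_const_nhds tendsto_const_nhds
  have hinner : Tendsto (fun ε => approxSum δ ε (δ ε x u) v w) (𝓝[>] 0) (𝓝 (S x v w)) :=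
    tendsto_approxSum hδ hS (hδ.tendsto_zero x u) tendsto_const_nhds tendsto_const_nhds
  refine tendsto_nhds_unique_of_eventuallyEq
    (tendsto_approxSum hδ hS tendsto_const_nhds (hsum x u v) tendsto_const_nhds)
    (tendsto_approxSum hδ hS tendsto_const_nhds tendsto_const_nhds hinner) ?_
  filter_upwards [self_mem_nhdsWithin] with ε hε
  exact (approxSum_approxSum hδ hε x u v w).symm

theorem limit_approxSum_limit_approxDiff (hδ : IsDilationFamily δ)
    (hS : TendstoLocallyUniformly (fun ε (p : X × X × X) => approxSum δ ε p.1 p.2.1 p.2.2)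
      (fun p => S p.1 p.2.1 p.2.2) (𝓝[>] 0))
    (hD : ∀ x u v : X, Tendsto (fun ε => approxDiff δ ε x u v) (𝓝[>] 0) (𝓝 (D x u v)))
    (x u v : X) : S x u (D x u v) = v := by
  refine tendsto_nhds_unique_of_eventuallyEq
    (tendsto_approxSum hδ hS tendsto_const_nhds tendsto_const_nhds (hD x u v))
    tendsto_const_nhds ?_
  filter_upwards [self_mem_nhdsWithin] with ε hε
  exact approxSum_approxDiff hδ hε x u v

end Limits

theorem tangent_space_group_structure_general
    {X : Type*} [MetricSpace X] [LocallyCompactSpace X]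
    (δ : ℝ → X → X → X)
    (hcomp : ∀ ε μ : ℝ, 0 < ε → 0 < μ → ∀ x y : X, δ ε x (δ μ x y) = δ (ε * μ) x y)
    (hone : ∀ x y : X, δ 1 x y = y)
    (hfix : ∀ ε : ℝ, 0 < ε → ∀ x : X, δ ε x x = x)
    (hcont : ContinuousOn (fun p : ℝ × X × X => δ p.1 p.2.1 p.2.2) {p | 0 < p.1})
    (hlim0 : ∀ x y : X, Tendsto (fun ε : ℝ => δ ε x y) (𝓝[>] (0 : ℝ)) (𝓝 x))
    (ΔL : X → X → X → X)
    (hA4 : ∀ K : Set (X × X × X), IsCompact K →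
      TendstoUniformlyOn
        (fun (ε : ℝ) (p : X × X × X) => δ ε⁻¹ (δ ε p.1 p.2.1) (δ ε p.1 p.2.2))
        (fun p => ΔL p.1 p.2.1 p.2.2) (𝓝[>] (0 : ℝ)) K)
    (SigL : X → X → X → X)
    (hSig : ∀ K : Set (X × X × X), IsCompact K →
      TendstoUniformlyOn
        (fun (ε : ℝ) (p : X × X × X) => δ ε⁻¹ p.1 (δ ε (δ ε p.1 p.2.1) p.2.2))
        (fun p => SigL p.1 p.2.1 p.2.2) (𝓝[>] (0 : ℝ)) K)
    (invL : X → X → X)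
    (hinv_eq : ∀ x u : X, invL x u = ΔL x u x) :
    ∀ x u v w : X,
      SigL x u (SigL x v w) = SigL x (SigL x u v) w ∧
      SigL x x u = u ∧ SigL x u x = u ∧
      SigL x u (invL x u) = x ∧ SigL x (invL x u) u = x ∧
      invL x (invL x u) = u := by
  intro x u v w
  have hδ : IsDilationFamily δ := ⟨hcomp, hone, hfix, hcont, hlim0⟩
  have hS := tendstoLocallyUniformly_iff_forall_isCompact.2 hSig
  have hD : ∀ x u v : X, Tendsto (fun ε => approxDiff δ ε x u v) (𝓝[>] 0) (𝓝 (ΔL x u v)) :=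
    fun x u v => (hA4 {(x, u, v)} isCompact_singleton).tendsto_at rfl
  let _ : Mul X := ⟨SigL x⟩
  let _ : One X := ⟨x⟩
  let _ : Group X := Group.ofLeftDiv (ΔL x) (limit_approxSum_assoc hδ hS x)
    (limit_approxSum_limit_approxDiff hδ hS hD x) (limit_approxDiff_self hδ hD x)
  simp only [hinv_eq]
  exact ⟨(mul_assoc u v w).symm, one_mul u, mul_one u, mul_inv_cancel u, inv_mul_cancel u,
    inv_inv u⟩

/-- Under axioms A3, A4 (uniform on compact sets) with each `d^x`
nondegenerate, let `Σ^x = lim Σ_ε^x` and `inv^x(u) = lim inv_ε^x(u) = Δ^x(u, x)`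
(uniform limits on compact sets). Then `(X, Σ^x)` is a group with neutral element
`x`: `Σ^x` is associative, `Σ^x(x,u) = Σ^x(u,x) = u`,
`Σ^x(u, inv^x(u)) = Σ^x(inv^x(u), u) = x`, and `inv^x(inv^x(u)) = u`. -/
theorem tangent_space_group_structure
    {X : Type*} [MetricSpace X] [CompleteSpace X] [LocallyCompactSpace X]
    (δ : ℝ → X → X → X)
    (hcomp : ∀ ε μ : ℝ, 0 < ε → 0 < μ → ∀ x y : X, δ ε x (δ μ x y) = δ (ε * μ) x y)
    (hone : ∀ x y : X, δ 1 x y = y)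
    (hfix : ∀ ε : ℝ, 0 < ε → ∀ x : X, δ ε x x = x)
    (hcont : ContinuousOn (fun p : ℝ × X × X => δ p.1 p.2.1 p.2.2) {p | 0 < p.1})
    (hlim0 : ∀ x y : X, Tendsto (fun ε : ℝ => δ ε x y) (𝓝[>] (0 : ℝ)) (𝓝 x))
    (dx : X → X → X → ℝ)
    (hA3 : ∀ K : Set (X × X × X), IsCompact K →
      TendstoUniformlyOn
        (fun (ε : ℝ) (p : X × X × X) => (1 / ε) * dist (δ ε p.1 p.2.1) (δ ε p.1 p.2.2))
        (fun p => dx p.1 p.2.1 p.2.2) (𝓝[>] (0 : ℝ)) K)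
    (ΔL : X → X → X → X)
    (hA4 : ∀ K : Set (X × X × X), IsCompact K →
      TendstoUniformlyOn
        (fun (ε : ℝ) (p : X × X × X) => δ ε⁻¹ (δ ε p.1 p.2.1) (δ ε p.1 p.2.2))
        (fun p => ΔL p.1 p.2.1 p.2.2) (𝓝[>] (0 : ℝ)) K)
    (hnd : ∀ x v w : X, dx x v w = 0 → v = w)
    (SigL : X → X → X → X)
    (hSig : ∀ K : Set (X × X × X), IsCompact K →
      TendstoUniformlyOn
        (fun (ε : ℝ) (p : X × X × X) => δ ε⁻¹ p.1 (δ ε (δ ε p.1 p.2.1) p.2.2))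
        (fun p => SigL p.1 p.2.1 p.2.2) (𝓝[>] (0 : ℝ)) K)
    (invL : X → X → X)
    (hinv : ∀ K : Set (X × X), IsCompact K →
      TendstoUniformlyOn
        (fun (ε : ℝ) (p : X × X) => δ ε⁻¹ (δ ε p.1 p.2) p.1)
        (fun p => invL p.1 p.2) (𝓝[>] (0 : ℝ)) K)
    (hinv_eq : ∀ x u : X, invL x u = ΔL x u x) :
    ∀ x u v w : X,
      SigL x u (SigL x v w) = SigL x (SigL x u v) w ∧
      SigL x x u = u ∧ SigL x u x = u ∧
      SigL x u (invL x u) = x ∧ SigL x (invL x u) u = x ∧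
      invL x (invL x u) = u :=
  tangent_space_group_structure_general δ hcomp hone hfix hcont hlim0 ΔL hA4 SigL hSig invL hinv_eq
end

section
/- Let (G, δ, ‖·‖) be a locally compact normed group with dilatations. Then the homogenized norm ‖x‖^N = lim_{ε→0+} (1/ε)‖δ_ε x‖ satisfies, for all x, y ∈ G and all η > 0: ‖δ_η x‖^N = η · ‖x‖^N; ‖β(x, y)‖^N ≤ ‖x‖^N + ‖y‖^N; and ‖x⁻¹‖^N = ‖x‖^N. -/
/-!
Each property of `‖·‖^N` is inherited from the corresponding property of `‖·‖` at scale `ε`,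
evaluated at a point that converges to the relevant point as `ε → 0`:
`δ_ε⁻¹(δ_ε x · δ_ε y) → β(x, y)` and `δ_ε⁻¹((δ_ε x)⁻¹) → x⁻¹`, while homogeneity is a
reparametrisation `ε ↦ ηε` of the limit. Passing to the limit along such moving points needs the
convergence of the rescaled norms to be locally uniform, which is where uniform convergence on
compacta and local compactness enter.
-/

open Filter Topology

theorem tendsto_comp_of_tendstoUniformlyOn_isCompact {ι X α : Type*} [TopologicalSpace X]
    [LocallyCompactSpace X] [UniformSpace α] {F : ι → X → α} {f : X → α} {p : Filter ι}
    [p.NeBot] {g : ι → X} {a : X} (hF : ∀ K, IsCompact K → TendstoUniformlyOn F f p K)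
    (hFcont : ∀ᶠ i in p, Continuous (F i)) (hg : Tendsto g p (𝓝 a)) :
    Tendsto (fun i => F i (g i)) p (𝓝 (f a)) :=
  have hloc := tendstoLocallyUniformly_iff_forall_isCompact.2 hF
  hloc.tendsto_comp (hloc.continuous hFcont.frequently).continuousAt hg

theorem tendsto_mul_left_nhdsGT_zero {η : ℝ} (hη : 0 < η) :
    Tendsto (η * ·) (𝓝[>] (0 : ℝ)) (𝓝[>] 0) :=
  tendsto_comap.mono_left (comap_mulLeft_nhdsGT_zero hη).ge

section HomogenizedNorm

variable {G : Type*} {δ : ℝ → G → G} {nrm nrmN : G → ℝ}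

theorem dilation_dilation_inv (hcomp : ∀ ε μ : ℝ, 0 < ε → 0 < μ → ∀ x, δ ε (δ μ x) = δ (ε * μ) x)
    (hone : ∀ x, δ 1 x = x) {ε : ℝ} (hε : 0 < ε) (x : G) : δ ε (δ ε⁻¹ x) = x := by
  rw [hcomp ε ε⁻¹ hε (inv_pos.mpr hε), mul_inv_cancel₀ hε.ne', hone]

theorem tendsto_rescaled_norm_comp [TopologicalSpace G] [LocallyCompactSpace G]
    (hδcont : ∀ ε : ℝ, 0 < ε → Continuous (δ ε)) (hncont : Continuous nrm)
    (hnrmN : ∀ K : Set G, IsCompact K →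
      TendstoUniformlyOn (fun (ε : ℝ) (x : G) => (1 / ε) * nrm (δ ε x)) nrmN (𝓝[>] 0) K)
    {g : ℝ → G} {a : G} (hg : Tendsto g (𝓝[>] 0) (𝓝 a)) :
    Tendsto (fun ε => (1 / ε) * nrm (δ ε (g ε))) (𝓝[>] 0) (𝓝 (nrmN a)) := by
  refine tendsto_comp_of_tendstoUniformlyOn_isCompact hnrmN ?_ hg
  filter_upwards [self_mem_nhdsWithin] with ε hε
  exact continuous_const.mul (hncont.comp (hδcont ε hε))

theorem homogenizedNorm_dilation
    (hcomp : ∀ ε μ : ℝ, 0 < ε → 0 < μ → ∀ x, δ ε (δ μ x) = δ (ε * μ) x)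
    (hlim : ∀ x, Tendsto (fun ε => (1 / ε) * nrm (δ ε x)) (𝓝[>] 0) (𝓝 (nrmN x)))
    {η : ℝ} (hη : 0 < η) (x : G) : nrmN (δ η x) = η * nrmN x := by
  have hrescaled := ((hlim x).comp (tendsto_mul_left_nhdsGT_zero hη)).const_mul η
  refine tendsto_nhds_unique (hlim (δ η x)) (hrescaled.congr' ?_)
  filter_upwards [self_mem_nhdsWithin] with ε (hε : 0 < ε)
  rw [Function.comp_apply, hcomp ε η hε hη, mul_comm ε η]
  field_simp

theorem homogenizedNorm_le_add [Mul G]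
    (hcomp : ∀ ε μ : ℝ, 0 < ε → 0 < μ → ∀ x, δ ε (δ μ x) = δ (ε * μ) x)
    (hone : ∀ x, δ 1 x = x) (hsub : ∀ x y, nrm (x * y) ≤ nrm x + nrm y)
    (hlim : ∀ x, Tendsto (fun ε => (1 / ε) * nrm (δ ε x)) (𝓝[>] 0) (𝓝 (nrmN x)))
    {x y b : G}
    (hb : Tendsto (fun ε => (1 / ε) * nrm (δ ε (δ ε⁻¹ (δ ε x * δ ε y)))) (𝓝[>] 0) (𝓝 (nrmN b))) :
    nrmN b ≤ nrmN x + nrmN y := by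
  refine le_of_tendsto_of_tendsto hb ((hlim x).add (hlim y)) ?_
  filter_upwards [self_mem_nhdsWithin] with ε (hε : 0 < ε)
  rw [dilation_dilation_inv hcomp hone hε, ← mul_add]
  exact mul_le_mul_of_nonneg_left (hsub _ _) (by positivity)

theorem homogenizedNorm_inv [Inv G]
    (hcomp : ∀ ε μ : ℝ, 0 < ε → 0 < μ → ∀ x, δ ε (δ μ x) = δ (ε * μ) x)
    (hone : ∀ x, δ 1 x = x) (hsymm : ∀ x, nrm x⁻¹ = nrm x)
    (hlim : ∀ x, Tendsto (fun ε => (1 / ε) * nrm (δ ε x)) (𝓝[>] 0) (𝓝 (nrmN x)))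
    {x : G}
    (hinv : Tendsto (fun ε => (1 / ε) * nrm (δ ε (δ ε⁻¹ (δ ε x)⁻¹))) (𝓝[>] 0) (𝓝 (nrmN x⁻¹))) :
    nrmN x⁻¹ = nrmN x := by
  refine tendsto_nhds_unique (hinv.congr' ?_) (hlim x)
  filter_upwards [self_mem_nhdsWithin] with ε (hε : 0 < ε)
  rw [dilation_dilation_inv hcomp hone hε, hsymm]

end HomogenizedNorm

theorem homogeneous_norm_properties_general
    {G : Type*} [Group G] [UniformSpace G]
    [LocallyCompactSpace G]
    (δ : ℝ → G → G)
    (hδcont : ∀ ε : ℝ, 0 < ε → Continuous (δ ε))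
    (hcomp : ∀ ε μ : ℝ, 0 < ε → 0 < μ → ∀ x : G, δ ε (δ μ x) = δ (ε * μ) x)
    (hone : ∀ x : G, δ 1 x = x)
    (β : G → G → G)
    (hH1 : ∀ K : Set (G × G), IsCompact K →
      TendstoUniformlyOn (fun (ε : ℝ) (p : G × G) => δ ε⁻¹ (δ ε p.1 * δ ε p.2))
        (fun p => β p.1 p.2) (𝓝[>] (0 : ℝ)) K)
    (hH2 : ∀ K : Set G, IsCompact K →
      TendstoUniformlyOn (fun (ε : ℝ) (x : G) => δ ε⁻¹ ((δ ε x)⁻¹)) (fun x => x⁻¹)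
        (𝓝[>] (0 : ℝ)) K)
    (nrm : G → ℝ) (hncont : Continuous nrm)
    (hsub : ∀ x y : G, nrm (x * y) ≤ nrm x + nrm y)
    (hsymm : ∀ x : G, nrm x⁻¹ = nrm x)
    (nrmN : G → ℝ)
    (hnrmN : ∀ K : Set G, IsCompact K →
      TendstoUniformlyOn (fun (ε : ℝ) (x : G) => (1 / ε) * nrm (δ ε x)) nrmN
        (𝓝[>] (0 : ℝ)) K) :
    ∀ x y : G, ∀ η : ℝ, 0 < η →
      nrmN (δ η x) = η * nrmN x ∧
      nrmN (β x y) ≤ nrmN x + nrmN y ∧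
      nrmN x⁻¹ = nrmN x := by
  intro x y η hη
  have hmoving {g : ℝ → G} {a : G} (hg : Tendsto g (𝓝[>] 0) (𝓝 a)) :=
    tendsto_rescaled_norm_comp hδcont hncont hnrmN hg
  have hlim (z : G) := hmoving (tendsto_const_nhds (x := z))
  have hβ := (hH1 {(x, y)} isCompact_singleton).tendsto_at rfl
  have hinv := (hH2 {x} isCompact_singleton).tendsto_at rfl
  exact ⟨homogenizedNorm_dilation hcomp hlim hη x,
    homogenizedNorm_le_add hcomp hone hsub hlim (hmoving hβ),
    homogenizedNorm_inv hcomp hone hsymm hlim (hmoving hinv)⟩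

/-- For a locally compact normed group with dilatations
`(G, δ, ‖·‖)`, the homogenized norm `‖x‖^N = lim_{ε→0+} (1/ε)‖δ_ε x‖` satisfies,
for all `x, y ∈ G` and all `η > 0`: `‖δ_η x‖^N = η·‖x‖^N`,
`‖β(x,y)‖^N ≤ ‖x‖^N + ‖y‖^N`, and `‖x⁻¹‖^N = ‖x‖^N`. -/
theorem homogeneous_norm_properties
    {G : Type*} [Group G] [UniformSpace G] [IsUniformGroup G]
    [LocallyCompactSpace G] [T2Space G]
    (δ : ℝ → G → G)
    (hδcont : ∀ ε : ℝ, 0 < ε → Continuous (δ ε))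
    (hcomp : ∀ ε μ : ℝ, 0 < ε → 0 < μ → ∀ x : G, δ ε (δ μ x) = δ (ε * μ) x)
    (hone : ∀ x : G, δ 1 x = x)
    (hH0 : ∀ K : Set G, IsCompact K →
      TendstoUniformlyOn (fun (ε : ℝ) (x : G) => δ ε x) (fun _ => (1 : G))
        (𝓝[>] (0 : ℝ)) K)
    (β : G → G → G)
    (hH1 : ∀ K : Set (G × G), IsCompact K →
      TendstoUniformlyOn (fun (ε : ℝ) (p : G × G) => δ ε⁻¹ (δ ε p.1 * δ ε p.2))
        (fun p => β p.1 p.2) (𝓝[>] (0 : ℝ)) K)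
    (hH2 : ∀ K : Set G, IsCompact K →
      TendstoUniformlyOn (fun (ε : ℝ) (x : G) => δ ε⁻¹ ((δ ε x)⁻¹)) (fun x => x⁻¹)
        (𝓝[>] (0 : ℝ)) K)
    (nrm : G → ℝ) (hncont : Continuous nrm)
    (hnonneg : ∀ x : G, 0 ≤ nrm x)
    (hzero : ∀ x : G, nrm x = 0 ↔ x = 1)
    (hsub : ∀ x y : G, nrm (x * y) ≤ nrm x + nrm y)
    (hsymm : ∀ x : G, nrm x⁻¹ = nrm x)
    (nrmN : G → ℝ)
    (hnrmN : ∀ K : Set G, IsCompact K →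
      TendstoUniformlyOn (fun (ε : ℝ) (x : G) => (1 / ε) * nrm (δ ε x)) nrmN
        (𝓝[>] (0 : ℝ)) K)
    (hnrmN0 : ∀ x : G, nrmN x = 0 → x = 1) :
    ∀ x y : G, ∀ η : ℝ, 0 < η →
      nrmN (δ η x) = η * nrmN x ∧
      nrmN (β x y) ≤ nrmN x + nrmN y ∧
      nrmN x⁻¹ = nrmN x :=
  homogeneous_norm_properties_general δ hδcont hcomp hone β hH1 hH2 nrm hncont hsub hsymm nrmN hnrmN
end
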